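/- Let g be a trigonometric polynomial on ℝᵐ, i.e. g(y) = Σ_{k∈F} C_k e^{2πi k·y} for a finite set F ⊆ ℤᵐ and coefficients C_k ∈ ℂ. Then the ergodic mean of f = g ∘ R exists and equals the mean of g over the periodic cell: lim_{A→+∞} (2A)^{-n} ∫_{(-A,A)ⁿ} g(Rx) dx = ∫_{Yᵐ} g(y) dy, which equals the coefficient C_0 (with C_0 := 0 if 0 ∉ F). -/

import Mathlib

open MeasureTheory Filter Topology Matrix ENNReal

noncomputable section

/-- The unit periodicity cell `(0,1)^m`. -/
def unitCell (m : ℕ) : Set (Fin m → ℝ) := Set.univ.pi fun _ => Set.Ioo (0:ℝ) 1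

/-- The symmetric box `(-A, A)^n`. -/
def symBox (n : ℕ) (A : ℝ) : Set (Fin n → ℝ) := Set.univ.pi fun _ => Set.Ioo (-A) A

/-!
Both sides are linear in `g`, so it suffices to treat one mode `y ↦ exp (2πi k ⬝ᵥ y)`. Composed
with `R` it becomes `x ↦ exp (2πi (Rᵀ k) ⬝ᵥ x)`, which factors over the coordinates of `x`; hence its
mean over `(-A, A)ⁿ` is a product of one-dimensional means `(2A)⁻¹ ∫_{-A}^{A} exp (2πi ξⱼ t) dt`,
each equal to `1` if `ξⱼ = 0` and `O(1/A)` otherwise. So the mean tends to `1` if `Rᵀ k = 0` and to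
`0` otherwise, and by the irrationality criterion `Rᵀ k = 0` only for `k = 0`. The cell integral of
the mode is `1` for `k = 0` and `0` otherwise, by the same factorization and periodicity.
-/

open Complex
open scoped Real

lemma norm_exp_two_pi_I_mul_ofReal (r : ℝ) : ‖exp (2 * π * I * r)‖ = 1 := by
  rw [show 2 * π * I * r = ((2 * π * r : ℝ) : ℂ) * I by push_cast; ring, norm_exp_ofReal_mul_I]

lemma integral_Ioo_exp_two_pi_I_mul {a b c : ℝ} (hab : a ≤ b) (hc : c ≠ 0) :
    ∫ t in Set.Ioo a b, exp (2 * π * I * ↑(c * t)) =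
      (exp (2 * π * I * ↑(c * b)) - exp (2 * π * I * ↑(c * a))) / (2 * π * I * c) := by
  have hc' : 2 * π * I * c ≠ 0 := by simp [Real.pi_ne_zero, hc]
  rw [← integral_Ioc_eq_integral_Ioo, ← intervalIntegral.integral_of_le hab]
  push_cast
  simpa only [mul_assoc] using integral_exp_mul_complex (a := a) (b := b) hc'

lemma norm_integral_Ioo_exp_two_pi_I_mul_le {a b c : ℝ} (hab : a ≤ b) (hc : c ≠ 0) :
    ‖∫ t in Set.Ioo a b, exp (2 * π * I * ↑(c * t))‖ ≤ (π * |c|)⁻¹ := by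
  have hdenom : ‖2 * π * I * (c : ℂ)‖ = 2 * (π * |c|) := by
    simp [abs_of_pos Real.pi_pos, mul_assoc]
  have hnum : ‖exp (2 * π * I * ↑(c * b)) - exp (2 * π * I * ↑(c * a))‖ ≤ 2 :=
    (norm_sub_le _ _).trans_eq <| by
      rw [norm_exp_two_pi_I_mul_ofReal, norm_exp_two_pi_I_mul_ofReal]; norm_num
  rw [integral_Ioo_exp_two_pi_I_mul hab hc, norm_div, hdenom]
  calc _ ≤ 2 / (2 * (π * |c|)) := by gcongr
    _ = (π * |c|)⁻¹ := by field_simp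

lemma integral_Ioo_zero_one_exp_two_pi_I_intCast_mul (k : ℤ) :
    ∫ t in Set.Ioo (0 : ℝ) 1, exp (2 * π * I * ↑(k * t)) = if k = 0 then 1 else 0 := by
  split_ifs with hk
  · simp [hk]
  · have hperiod (t : ℤ) : exp (2 * π * I * ↑((k : ℝ) * t)) = 1 := by
      rw [show 2 * π * I * ↑((k : ℝ) * t) = ↑(k * t) * (2 * π * I) by push_cast; ring]
      exact exp_int_mul_two_pi_mul_I _
    rw [integral_Ioo_exp_two_pi_I_mul zero_le_one (Int.cast_ne_zero.2 hk)]
    simpa using congr_arg₂ (fun u v => (u - v) / (2 * π * I * k)) (hperiod 1) (hperiod 0)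

lemma tendsto_mean_Ioo_exp_two_pi_I_mul (c : ℝ) :
    Tendsto (fun A : ℝ => (2 * A)⁻¹ • ∫ t in Set.Ioo (-A) A, exp (2 * π * I * ↑(c * t)))
      atTop (𝓝 (if c = 0 then 1 else 0)) := by
  split_ifs with hc
  · refine tendsto_const_nhds.congr' ?_
    filter_upwards [eventually_gt_atTop 0] with A hA
    simp only [hc, zero_mul, Complex.ofReal_zero, mul_zero, exp_zero, setIntegral_const,
      Real.volume_real_Ioo_of_le (by linarith : -A ≤ A), smul_smul]
    rw [show (2 * A)⁻¹ * (A - -A) = 1 by field_simp; ring, one_smul]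
  · have hbound : Tendsto (fun A : ℝ => (2 * A)⁻¹ * (π * |c|)⁻¹) atTop (𝓝 0) := by
      simpa using (tendsto_inv_atTop_zero.comp (tendsto_id.const_mul_atTop two_pos)).mul_const
        (π * |c|)⁻¹
    refine squeeze_zero_norm' ?_ hbound
    filter_upwards [eventually_gt_atTop 0] with A hA
    rw [norm_smul, Real.norm_of_nonneg (by positivity)]
    exact mul_le_mul_of_nonneg_left (norm_integral_Ioo_exp_two_pi_I_mul_le (by linarith) hc)
      (by positivity)

section

variable {ι : Type*} [Fintype ι]

lemma setIntegral_univ_pi_prod {𝕜 : Type*} [RCLike 𝕜] {E : ι → Type*}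
    [∀ i, MeasureSpace (E i)] [∀ i, SigmaFinite (volume : Measure (E i))]
    (s : (i : ι) → Set (E i)) (f : (i : ι) → E i → 𝕜) :
    ∫ x in Set.univ.pi s, ∏ i, f i (x i) = ∏ i, ∫ t in s i, f i t := by
  rw [volume_pi, Measure.restrict_pi_pi, integral_fintype_prod_eq_prod]

lemma exp_two_pi_I_mul_dotProduct (ξ x : ι → ℝ) :
    exp (2 * π * I * ↑(ξ ⬝ᵥ x)) = ∏ i, exp (2 * π * I * ↑(ξ i * x i)) := by
  rw [← exp_sum, dotProduct, ofReal_sum, Finset.mul_sum]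

lemma sum_intCast_mul_ofReal_eq_dotProduct (k : ι → ℤ) (y : ι → ℝ) :
    ∑ i, (k i : ℂ) * (y i : ℂ) = ↑((fun i => (k i : ℝ)) ⬝ᵥ y) := by
  push_cast [dotProduct]
  rfl

lemma volume_univ_pi_Ioo_lt_top (a b : ℝ) :
    volume (Set.univ.pi fun _ : ι => Set.Ioo a b) < ⊤ := by
  rw [volume_pi_pi]
  exact ENNReal.prod_lt_top fun _ _ => measure_Ioo_lt_top

lemma integrableOn_exp_two_pi_I_dotProduct {S : Set (ι → ℝ)} (hS : volume S ≠ ⊤) (ξ : ι → ℝ) :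
    IntegrableOn (fun x => exp (2 * π * I * ↑(ξ ⬝ᵥ x))) S :=
  Measure.integrableOn_of_bounded (M := 1) hS (by fun_prop : Continuous _).aestronglyMeasurable
    (.of_forall fun _ => (norm_exp_two_pi_I_mul_ofReal _).le)

lemma setIntegral_sum_mul_exp_two_pi_I_dotProduct {κ : Type*} {S : Set (ι → ℝ)}
    (hS : volume S ≠ ⊤) (F : Finset κ) (C : κ → ℂ) (ξ : κ → ι → ℝ) :
    ∫ x in S, ∑ k ∈ F, C k * exp (2 * π * I * ↑(ξ k ⬝ᵥ x)) =
      ∑ k ∈ F, C k * ∫ x in S, exp (2 * π * I * ↑(ξ k ⬝ᵥ x)) := by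
  rw [integral_finsetSum _ fun k _ => (integrableOn_exp_two_pi_I_dotProduct hS (ξ k)).const_mul _]
  simp_rw [integral_const_mul]

lemma setIntegral_univ_pi_Ioo_exp_two_pi_I_dotProduct (ξ : ι → ℝ) (a b : ℝ) :
    ∫ x in Set.univ.pi (fun _ => Set.Ioo a b), exp (2 * π * I * ↑(ξ ⬝ᵥ x)) =
      ∏ i, ∫ t in Set.Ioo a b, exp (2 * π * I * ↑(ξ i * t)) := by
  simp_rw [exp_two_pi_I_mul_dotProduct]
  exact setIntegral_univ_pi_prod _ fun i t => exp (2 * π * I * ↑(ξ i * t))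

end

lemma integral_unitCell_exp_two_pi_I_dotProduct {m : ℕ} (k : Fin m → ℤ) :
    ∫ y in unitCell m, exp (2 * π * I * ↑((fun i => (k i : ℝ)) ⬝ᵥ y)) =
      if k = 0 then 1 else 0 := by
  simp_rw [unitCell, setIntegral_univ_pi_Ioo_exp_two_pi_I_dotProduct,
    integral_Ioo_zero_one_exp_two_pi_I_intCast_mul, Finset.prod_boole]
  simp [funext_iff]

lemma tendsto_symBox_mean_exp_two_pi_I_dotProduct {n : ℕ} (ξ : Fin n → ℝ) :
    Tendsto (fun A : ℝ => ((2 * A) ^ n)⁻¹ • ∫ x in symBox n A, exp (2 * π * I * ↑(ξ ⬝ᵥ x)))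
      atTop (𝓝 (if ξ = 0 then 1 else 0)) := by
  have hmean (A : ℝ) : ((2 * A) ^ n)⁻¹ • ∫ x in symBox n A, exp (2 * π * I * ↑(ξ ⬝ᵥ x)) =
      ∏ j, (2 * A)⁻¹ • ∫ t in Set.Ioo (-A) A, exp (2 * π * I * ↑(ξ j * t)) := by
    rw [symBox, setIntegral_univ_pi_Ioo_exp_two_pi_I_dotProduct, ← inv_pow, ← Finset.smul_prod,
      Finset.card_univ, Fintype.card_fin]
  have hprod := tendsto_finsetProd Finset.univ fun j _ => tendsto_mean_Ioo_exp_two_pi_I_mul (ξ j)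
  rw [Finset.prod_boole] at hprod
  simpa [hmean, funext_iff] using hprod

theorem ergodic_mean_trig_poly_general
    (m n : ℕ)
    (R : Matrix (Fin m) (Fin n) ℝ)
    (hR : ∀ k : Fin m → ℤ, k ≠ 0 → R.transpose.mulVec (fun i => (k i : ℝ)) ≠ 0)
    (F : Finset (Fin m → ℤ)) (C : (Fin m → ℤ) → ℂ)
    (g : (Fin m → ℝ) → ℂ)
    (hg : ∀ y : Fin m → ℝ,
      g y = ∑ k ∈ F, C k * Complex.exp (2 * Real.pi * Complex.I * (∑ i, (k i : ℂ) * (y i : ℂ)))) :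
    Tendsto (fun A : ℝ => ((2 * A) ^ n)⁻¹ • ∫ x in symBox n A, g (R.mulVec x))
      atTop (nhds (∫ y in unitCell m, g y)) ∧
    (∫ y in unitCell m, g y) = (if (0 : Fin m → ℤ) ∈ F then C 0 else 0) := by
  have hg_dot (y : Fin m → ℝ) :
      g y = ∑ k ∈ F, C k * exp (2 * π * I * ↑((fun i => (k i : ℝ)) ⬝ᵥ y)) := by
    simp_rw [hg, sum_intCast_mul_ofReal_eq_dotProduct]
  have hgR (x : Fin n → ℝ) :
      g (R *ᵥ x) = ∑ k ∈ F, C k * exp (2 * π * I * ↑((Rᵀ *ᵥ fun i => (k i : ℝ)) ⬝ᵥ x)) := by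
    simp_rw [hg_dot, dotProduct_mulVec, mulVec_transpose]
  have hfreq (k : Fin m → ℤ) : (Rᵀ *ᵥ (fun i => (k i : ℝ)) = 0) ↔ k = 0 := by
    refine ⟨not_imp_not.1 (hR k), fun hk => ?_⟩
    simp [hk, ← Pi.zero_def]
  have hcoeff : ∑ k ∈ F, C k * (if k = 0 then 1 else 0) = if 0 ∈ F then C 0 else 0 := by
    simp_rw [mul_ite, mul_one, mul_zero, Finset.sum_ite_eq']
  have hcell : ∫ y in unitCell m, g y = if 0 ∈ F then C 0 else 0 := by
    simp_rw [hg_dot]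
    rw [setIntegral_sum_mul_exp_two_pi_I_dotProduct (S := unitCell m)
      (volume_univ_pi_Ioo_lt_top 0 1).ne]
    simp_rw [integral_unitCell_exp_two_pi_I_dotProduct, hcoeff]
  have hmean (A : ℝ) : ((2 * A) ^ n)⁻¹ • ∫ x in symBox n A, g (R *ᵥ x) =
      ∑ k ∈ F, C k * ((2 * A) ^ n)⁻¹ • ∫ x in symBox n A,
        exp (2 * π * I * ↑((Rᵀ *ᵥ fun i => (k i : ℝ)) ⬝ᵥ x)) := by
    simp_rw [hgR]
    rw [setIntegral_sum_mul_exp_two_pi_I_dotProduct (S := symBox n A)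
      (volume_univ_pi_Ioo_lt_top _ _).ne, Finset.smul_sum]
    simp_rw [mul_smul_comm]
  refine ⟨?_, hcell⟩
  simp_rw [hmean, hcell, ← hcoeff, ← hfreq]
  exact tendsto_finsetSum F fun k _ =>
    (tendsto_symBox_mean_exp_two_pi_I_dotProduct _).const_mul (C k)

/-- for a trigonometric polynomial `g` on `ℝ^m` and a cut-and-projection
matrix `R : ℝ^n → ℝ^m` satisfying the irrationality criterion, the ergodic mean of
`f = g ∘ R` exists and equals the mean of `g` over the unit cell, which is the
zero Fourier coefficient `C 0` (zero if `0 ∉ F`). -/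
theorem ergodic_mean_trig_poly
    (m n : ℕ) (hn : 1 ≤ n) (hmn : n < m)
    (R : Matrix (Fin m) (Fin n) ℝ)
    (hR : ∀ k : Fin m → ℤ, k ≠ 0 → R.transpose.mulVec (fun i => (k i : ℝ)) ≠ 0)
    (F : Finset (Fin m → ℤ)) (C : (Fin m → ℤ) → ℂ)
    (g : (Fin m → ℝ) → ℂ)
    (hg : ∀ y : Fin m → ℝ,
      g y = ∑ k ∈ F, C k * Complex.exp (2 * Real.pi * Complex.I * (∑ i, (k i : ℂ) * (y i : ℂ)))) :
    Tendsto (fun A : ℝ => ((2 * A) ^ n)⁻¹ • ∫ x in symBox n A, g (R.mulVec x))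
      atTop (nhds (∫ y in unitCell m, g y)) ∧
    (∫ y in unitCell m, g y) = (if (0 : Fin m → ℤ) ∈ F then C 0 else 0) :=
  ergodic_mean_trig_poly_general m n R hR F C g hg
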